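/- Let ρ be the unique real root in (1, 1.1) of 6 = ρ^2 + ρ^3 + ρ^4 + ρ^5 + ρ^6. Then V(τ) = C·ρ^τ solves the difference equation V(τ) = (1/6)(V(τ+2)+V(τ+3)+V(τ+4)+V(τ+5)+V(τ+6)) for all τ, and for C large enough also V(τ) ≥ τ for all τ ≥ 0. In particular the Pig-game Bellman equation V(τ) = max{τ, (1/6)Σ_{j=2}^{6} V(τ+j)} has infinitely many solutions. -/
import Mathlib


/-- The Bellman equation of the solitaire Pig game. -/
def PigBellman (V : ℕ → ℝ) : Prop :=
  ∀ τ : ℕ, V τ =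
    max (τ : ℝ) ((1 / 6) * (V (τ + 2) + V (τ + 3) + V (τ + 4) + V (τ + 5) + V (τ + 6)))

private lemma pig_mono : StrictMonoOn
    (fun ρ : ℝ => ρ ^ 2 + ρ ^ 3 + ρ ^ 4 + ρ ^ 5 + ρ ^ 6) (Set.Icc (1 : ℝ) 1.1) := by
  intro x hx y hy hxy
  have hx1 : (1:ℝ) ≤ x := hx.1
  have hx0 : (0:ℝ) ≤ x := by linarith
  have h2 : x ^ 2 < y ^ 2 := pow_lt_pow_left₀ hxy hx0 (by norm_num)
  have h3 : x ^ 3 < y ^ 3 := pow_lt_pow_left₀ hxy hx0 (by norm_num)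
  have h4 : x ^ 4 < y ^ 4 := pow_lt_pow_left₀ hxy hx0 (by norm_num)
  have h5 : x ^ 5 < y ^ 5 := pow_lt_pow_left₀ hxy hx0 (by norm_num)
  have h6 : x ^ 6 < y ^ 6 := pow_lt_pow_left₀ hxy hx0 (by norm_num)
  dsimp only
  linarith

private lemma pig_exists : ∃ ρ : ℝ, ρ ∈ Set.Ioo (1 : ℝ) 1.1 ∧
    ρ ^ 2 + ρ ^ 3 + ρ ^ 4 + ρ ^ 5 + ρ ^ 6 = 6 := by
  set f : ℝ → ℝ := fun ρ => ρ ^ 2 + ρ ^ 3 + ρ ^ 4 + ρ ^ 5 + ρ ^ 6 with hf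
  have hcont : Continuous f := by fun_prop
  have hsub := intermediate_value_Ioo (by norm_num : (1:ℝ) ≤ 1.1) hcont.continuousOn
  have h6 : (6:ℝ) ∈ Set.Ioo (f 1) (f 1.1) := by
    constructor <;> · simp only [hf]; norm_num
  obtain ⟨ρ, hρ, hρ6⟩ := hsub h6
  exact ⟨ρ, hρ, hρ6⟩

/-- the per-root statement -/
private lemma pig_main (ρ : ℝ) (hρ : ρ ∈ Set.Ioo (1 : ℝ) 1.1)
    (heq : ρ ^ 2 + ρ ^ 3 + ρ ^ 4 + ρ ^ 5 + ρ ^ 6 = 6) :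
    ∀ C : ℝ, 1 / (ρ - 1) ≤ C →
      (∀ τ : ℕ, C * ρ ^ τ = (1 / 6) *
        (C * ρ ^ (τ + 2) + C * ρ ^ (τ + 3) + C * ρ ^ (τ + 4) +
          C * ρ ^ (τ + 5) + C * ρ ^ (τ + 6))) ∧
      (∀ τ : ℕ, (τ : ℝ) ≤ C * ρ ^ τ) ∧
      PigBellman (fun τ => C * ρ ^ τ) := by
  intro C hC
  have hρ1 : (1:ℝ) < ρ := hρ.1
  have hden : (0:ℝ) < ρ - 1 := by linarith
  have hCpos : 0 < C := lt_of_lt_of_le (by positivity) hC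
  have h1 : 1 ≤ C * (ρ - 1) := (div_le_iff₀ hden).mp hC
  have hdiff : ∀ τ : ℕ, C * ρ ^ τ = (1 / 6) *
      (C * ρ ^ (τ + 2) + C * ρ ^ (τ + 3) + C * ρ ^ (τ + 4) +
        C * ρ ^ (τ + 5) + C * ρ ^ (τ + 6)) := by
    intro τ
    have : C * ρ ^ (τ + 2) + C * ρ ^ (τ + 3) + C * ρ ^ (τ + 4) +
        C * ρ ^ (τ + 5) + C * ρ ^ (τ + 6)
        = C * ρ ^ τ * (ρ ^ 2 + ρ ^ 3 + ρ ^ 4 + ρ ^ 5 + ρ ^ 6) := by ring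
    rw [this, heq]; ring
  have hlow : ∀ τ : ℕ, (τ : ℝ) ≤ C * ρ ^ τ := by
    intro τ
    have hbern : 1 + (τ : ℝ) * (ρ - 1) ≤ ρ ^ τ := by
      have := one_add_mul_le_pow (by linarith : (-2:ℝ) ≤ ρ - 1) τ
      simpa [mul_comm] using this
    have hτ0 : (0:ℝ) ≤ (τ : ℝ) := Nat.cast_nonneg τ
    nlinarith [mul_le_mul_of_nonneg_left hbern (le_of_lt hCpos)]
  refine ⟨hdiff, hlow, ?_⟩
  intro τ
  simp only
  rw [max_eq_right]
  · exact hdiff τ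
  · rw [← hdiff τ]; exact hlow τ

/-- the equation `ρ² + ρ³ + ρ⁴ + ρ⁵ + ρ⁶ = 6` has a unique
root `ρ ∈ (1, 1.1)`; for any such root and all sufficiently large `C`, the
function `V(τ) = C·ρ^τ` solves the difference equation
`V(τ) = (1/6)(V(τ+2)+V(τ+3)+V(τ+4)+V(τ+5)+V(τ+6))`, satisfies `V(τ) ≥ τ`
for all `τ ≥ 0`, and hence solves the Pig-game Bellman equation.  In
particular the Bellman equation has infinitely many solutions. -/
theorem stmt10 :
    (∃! ρ : ℝ, ρ ∈ Set.Ioo (1 : ℝ) 1.1 ∧ ρ ^ 2 + ρ ^ 3 + ρ ^ 4 + ρ ^ 5 + ρ ^ 6 = 6) ∧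
    (∀ ρ : ℝ, ρ ∈ Set.Ioo (1 : ℝ) 1.1 → ρ ^ 2 + ρ ^ 3 + ρ ^ 4 + ρ ^ 5 + ρ ^ 6 = 6 →
      ∃ C₀ : ℝ, ∀ C : ℝ, C₀ ≤ C →
        (∀ τ : ℕ, C * ρ ^ τ = (1 / 6) *
          (C * ρ ^ (τ + 2) + C * ρ ^ (τ + 3) + C * ρ ^ (τ + 4) +
            C * ρ ^ (τ + 5) + C * ρ ^ (τ + 6))) ∧
        (∀ τ : ℕ, (τ : ℝ) ≤ C * ρ ^ τ) ∧
        PigBellman (fun τ => C * ρ ^ τ)) ∧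
    {V : ℕ → ℝ | PigBellman V}.Infinite := by
  obtain ⟨ρ, hρmem, hρeq⟩ := pig_exists
  refine ⟨⟨ρ, ⟨hρmem, hρeq⟩, ?_⟩, ?_, ?_⟩
  · rintro ρ' ⟨hρ'mem, hρ'eq⟩
    exact pig_mono.injOn (Set.Ioo_subset_Icc_self hρ'mem)
      (Set.Ioo_subset_Icc_self hρmem) (by rw [hρ'eq, hρeq])
  · intro q hqmem hqeq
    exact ⟨1 / (q - 1), pig_main q hqmem hqeq⟩
  · have hden : (0:ℝ) < ρ - 1 := by linarith [hρmem.1]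
    apply Set.infinite_of_injective_forall_mem
      (f := fun n : ℕ => fun τ : ℕ => (1 / (ρ - 1) + n) * ρ ^ τ)
    · intro n m h
      have h0 := congrFun h 0
      simp only [pow_zero, mul_one, add_right_inj] at h0
      exact_mod_cast h0
    · intro n
      exact (pig_main ρ hρmem hρeq (1 / (ρ - 1) + n)
        (le_add_of_nonneg_right (Nat.cast_nonneg n))).2.2
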